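/- Every connected claw-free finite simple graph with a unique perfect matching belongs to the class 𝒢. -/

import Mathlib

/-- A graph is claw-free if it has no induced subgraph isomorphic to `K_{1,3}`. -/
def ClawFree {V : Type*} (G : SimpleGraph V) : Prop :=
  ¬ ∃ a b c d : V, a ≠ b ∧ a ≠ c ∧ a ≠ d ∧ b ≠ c ∧ b ≠ d ∧ c ≠ d ∧
    G.Adj a b ∧ G.Adj a c ∧ G.Adj a d ∧ ¬ G.Adj b c ∧ ¬ G.Adj b d ∧ ¬ G.Adj c d

/-- Operation 1: add two new vertices `x = inr 0` and `y = inr 1`, and the three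
new edges `xy`, `xu`, `yu`. -/
def AddOp1 {V : Type*} (G : SimpleGraph V) (u : V) : SimpleGraph (V ⊕ Fin 2) :=
  SimpleGraph.fromRel fun a b =>
    match a, b with
    | Sum.inl a, Sum.inl b => G.Adj a b
    | Sum.inl a, Sum.inr _ => a = u
    | Sum.inr _, Sum.inr _ => True
    | _, _ => False

/-- Operation 2: add two new vertices `x = inr 0` and `y = inr 1`, the new edge `xy`,
and new edges between `x` and all vertices of `C`. -/
def AddOp2 {V : Type*} (G : SimpleGraph V) (C : Set V) : SimpleGraph (V ⊕ Fin 2) :=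
  SimpleGraph.fromRel fun a b =>
    match a, b with
    | Sum.inl a, Sum.inl b => G.Adj a b
    | Sum.inl a, Sum.inr i => i = 0 ∧ a ∈ C
    | Sum.inr _, Sum.inr _ => True
    | _, _ => False

/-- The class `𝒢`: obtained from `K₂` by iteratively applying Operation 1 (at a
simplicial vertex `u`) and Operation 2 (at a non-empty clique `C` such that
`N_G(u) \ C` is a clique for every `u ∈ C`), considered up to isomorphism. -/
inductive InClassG : ∀ (V : Type), SimpleGraph V → Prop
  | base : InClassG (Fin 2) ⊤
  | op1 {V : Type} (G : SimpleGraph V) (u : V)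
      (hu : G.IsClique (G.neighborSet u)) :
      InClassG V G → InClassG (V ⊕ Fin 2) (AddOp1 G u)
  | op2 {V : Type} (G : SimpleGraph V) (C : Set V) (hne : C.Nonempty)
      (hC : G.IsClique C) (hnbr : ∀ u ∈ C, G.IsClique (G.neighborSet u \ C)) :
      InClassG V G → InClassG (V ⊕ Fin 2) (AddOp2 G C)
  | iso {V W : Type} (G : SimpleGraph V) (H : SimpleGraph W) (e : G ≃g H) :
      InClassG V G → InClassG W H

/-!
Induction on the number of vertices: delete a matching edge `xy` of the unique perfect matching
so that the rest stays connected, claw-free and uniquely matchable. If `y` is a leaf, the other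
neighbours of `x` form a clique by claw-freeness, and `G` arises by Operation 2. Otherwise the
last matching edge `xy` of a longest alternating path spans a triangle `xyt` with `x` and `y` of
degree two, and `t` is simplicial once `x` and `y` are gone, so `G` arises by Operation 1: any
other chord at the end of the path would close an alternating cycle, which contradicts
uniqueness, or create a claw.
-/

section

open Function SimpleGraph

variable {V : Type}

theorem ClawFree.isClique_of_not_adj {G : SimpleGraph V} (hcf : ClawFree G) {c s : V}
    (hcs : G.Adj c s) : G.IsClique {v | G.Adj c v ∧ v ≠ s ∧ ¬G.Adj s v} := by
  rintro a ⟨hca, has, hsa⟩ b ⟨hcb, hbs, hsb⟩ hab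
  by_contra hnab
  exact hcf ⟨c, s, a, b, hcs.ne, hca.ne, hcb.ne, has.symm, hbs.symm, hab,
    hcs, hca, hcb, hsa, hsb, hnab⟩

theorem ClawFree.induce {G : SimpleGraph V} (hcf : ClawFree G) (s : Set V) :
    ClawFree (G.induce s) := by
  rintro ⟨a, b, c, d, hab, hac, had, hbc, hbd, hcd, h⟩
  exact hcf ⟨a, b, c, d, Subtype.coe_ne_coe.2 hab, Subtype.coe_ne_coe.2 hac,
    Subtype.coe_ne_coe.2 had, Subtype.coe_ne_coe.2 hbc, Subtype.coe_ne_coe.2 hbd,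
    Subtype.coe_ne_coe.2 hcd, h⟩

theorem ne_and_ne_of_mem_compl_pair {v x y : V} (hv : v ∈ ({x, y}ᶜ : Set V)) : v ≠ x ∧ v ≠ y := by
  simpa [not_or] using hv

namespace SimpleGraph

variable {G : SimpleGraph V}

theorem Reachable.mem_of_forall_adj_mem {S : Set V} (hS : ∀ ⦃v w⦄, v ∈ S → G.Adj v w → w ∈ S)
    {u v : V} (huv : G.Reachable u v) (hu : u ∈ S) : v ∈ S := by
  obtain ⟨p⟩ := huv
  induction p with
  | nil => exact hu
  | cons h _ ih => exact ih (hS hu h)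

/-- A walk through `T` enters and leaves `T` through the clique, so it can be short-cut. -/
theorem Connected.induce_compl_of_isClique (hG : G.Connected) {T : Set V}
    (hT : G.IsClique {v | v ∉ T ∧ ∃ u ∈ T, G.Adj u v}) (hne : Tᶜ.Nonempty) :
    (G.induce Tᶜ).Connected := by
  suffices key : ∀ {u b : V} (p : G.Walk u b) (hb : b ∉ T) (v : V) (hv : v ∉ T),
      (v = u ∨ u ∈ T ∧ ∃ w ∈ T, G.Adj w v) → (G.induce Tᶜ).Reachable ⟨v, hv⟩ ⟨b, hb⟩ by
    have : Nonempty ↥Tᶜ := hne.to_subtype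
    refine connected_iff _ |>.2 ⟨fun ⟨a, ha⟩ ⟨b, hb⟩ => ?_, this⟩
    obtain ⟨p⟩ := hG.preconnected a b
    exact key p hb a ha (.inl rfl)
  intro u b p
  induction p with
  | nil =>
    rintro hb v hv (rfl | ⟨hu, -⟩)
    · rfl
    · exact absurd hu hb
  | @cons u u' b huu' p ih =>
    rintro hb v hv hvu
    by_cases hu' : u' ∈ T
    · refine ih hb v hv (.inr ⟨hu', ?_⟩)
      rcases hvu with rfl | ⟨hu, w, hw, hwv⟩
      · exact ⟨u', hu', huu'.symm⟩
      · exact ⟨w, hw, hwv⟩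
    · refine Reachable.trans ?_ (ih hb u' hu' (.inl rfl))
      rcases hvu with rfl | ⟨hu, w, hw, hwv⟩
      · exact (induce_adj.2 huu').reachable
      · by_cases hvu' : v = u'
        · subst hvu'; rfl
        · exact (induce_adj.2 (hT ⟨hv, w, hw, hwv⟩ ⟨hu', u, hu, huu'⟩ hvu')).reachable

/-- `m` sends every vertex to its partner in a perfect matching of `G`. -/
structure IsPartnerMap (G : SimpleGraph V) (m : V → V) : Prop where
  adj : ∀ v, G.Adj v (m v)
  involutive : Involutive m

namespace IsPartnerMap

theorem ne (hm : G.IsPartnerMap m) (v : V) : m v ≠ v := (hm.adj v).ne'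

def toSubgraph (hm : G.IsPartnerMap m) : G.Subgraph where
  verts := Set.univ
  Adj a b := b = m a
  adj_sub := by rintro a _ rfl; exact hm.adj a
  edge_vert _ := trivial
  symm := ⟨by rintro a _ rfl; exact (hm.involutive a).symm⟩

theorem isPerfectMatching_toSubgraph (hm : G.IsPartnerMap m) :
    hm.toSubgraph.IsPerfectMatching :=
  ⟨fun v _ => ⟨m v, rfl, fun _ h => h⟩, fun _ => trivial⟩

end IsPartnerMap

theorem existsUnique_isPartnerMap_of_existsUnique_isPerfectMatching
    (h : ∃! M : G.Subgraph, M.IsPerfectMatching) : ∃! m : V → V, G.IsPartnerMap m := by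
  obtain ⟨M, hM, huniq⟩ := h
  choose m hm hm_unique using fun v => hM.1 (hM.2 v)
  refine ⟨m, ⟨fun v => M.adj_sub (hm v), fun v => (hm_unique _ _ (hm v).symm).symm⟩, ?_⟩
  intro m' hm'
  funext v
  have hM' : hm'.toSubgraph = M := huniq _ hm'.isPerfectMatching_toSubgraph
  exact hm_unique v _ (hM' ▸ rfl)

/-- A second partner map on `s` could be glued with `m` outside `s`. -/
theorem existsUnique_isPartnerMap_induce (hu : ∃! m, G.IsPartnerMap m)
    (hm : G.IsPartnerMap m) {s : Set V} (hs : ∀ v ∈ s, m v ∈ s) :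
    ∃! m' : s → s, (G.induce s).IsPartnerMap m' := by
  classical
  have hsc : ∀ v ∉ s, m v ∉ s := fun v hv hmv => hv (hm.involutive v ▸ hs _ hmv)
  refine ⟨fun v => ⟨m v, hs v v.2⟩,
    ⟨fun v => hm.adj v, fun v => Subtype.ext (hm.involutive v)⟩, fun m' hm' => ?_⟩
  let g : V → V := fun v => if h : v ∈ s then m' ⟨v, h⟩ else m v
  have hg_in : ∀ v : s, g v = m' v := fun v => dif_pos v.2
  have hg_out : ∀ v ∉ s, g v = m v := fun v hv => dif_neg hv
  have hg : G.IsPartnerMap g := by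
    refine ⟨fun v => ?_, fun v => ?_⟩
    · by_cases hv : v ∈ s
      · simpa only [hg_in ⟨v, hv⟩] using induce_adj.1 (hm'.adj ⟨v, hv⟩)
      · simpa only [hg_out v hv] using hm.adj v
    · by_cases hv : v ∈ s
      · rw [hg_in ⟨v, hv⟩, hg_in (m' ⟨v, hv⟩), hm'.involutive]
      · rw [hg_out v hv, hg_out _ (hsc v hv), hm.involutive]
  funext v
  exact Subtype.ext <| (hg_in v).symm.trans (congrFun (hu.unique hg hm) v)

/-- Along the alternating cycle `b 0, m (b 0), b 1, m (b 1), …, b n, m (b n)`, each `m (b i)` can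
be matched with `b (i + 1)` instead. -/
theorem IsPartnerMap.exists_shift_of_alternating_cycle (hm : G.IsPartnerMap m) {n : ℕ}
    (b : Fin (n + 1) → V) (hb : Injective b) (hbm : ∀ i j, b i ≠ m (b j))
    (hadj : ∀ i, G.Adj (m (b i)) (b (i + 1))) :
    ∃ f, G.IsPartnerMap f ∧ ∀ i, f (m (b i)) = b (i + 1) := by
  classical
  have hmb : Injective (m ∘ b) := hm.involutive.injective.comp hb
  let f : V → V := fun v =>
    if h : ∃ i, m (b i) = v then b (h.choose + 1)
    else if h : ∃ i, b i = v then m (b (h.choose - 1)) else m v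
  have f_mb : ∀ i, f (m (b i)) = b (i + 1) := fun i => by
    have h : ∃ j, m (b j) = m (b i) := ⟨i, rfl⟩
    simp only [f, dif_pos h, hmb h.choose_spec]
  have f_b : ∀ i, f (b i) = m (b (i - 1)) := fun i => by
    have h : ∃ j, b j = b i := ⟨i, rfl⟩
    have h' : ¬∃ j, m (b j) = b i := fun ⟨j, hj⟩ => hbm i j hj.symm
    simp only [f, dif_neg h', dif_pos h, hb h.choose_spec]
  have f_out : ∀ v, (∀ i, b i ≠ v) → (∀ i, m (b i) ≠ v) → f v = m v := fun v h₁ h₂ => by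
    simp only [f, dif_neg (not_exists.2 h₂), dif_neg (not_exists.2 h₁)]
  refine ⟨f, ⟨fun v => ?_, fun v => ?_⟩, f_mb⟩
  · by_cases h₂ : ∃ i, m (b i) = v
    · obtain ⟨i, rfl⟩ := h₂
      rw [f_mb]; exact hadj i
    by_cases h₁ : ∃ i, b i = v
    · obtain ⟨i, rfl⟩ := h₁
      rw [f_b]; simpa using (hadj (i - 1)).symm
    rw [f_out v (not_exists.1 h₁) (not_exists.1 h₂)]; exact hm.adj v
  · by_cases h₂ : ∃ i, m (b i) = v
    · obtain ⟨i, rfl⟩ := h₂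
      rw [f_mb, f_b, add_sub_cancel_right]
    by_cases h₁ : ∃ i, b i = v
    · obtain ⟨i, rfl⟩ := h₁
      rw [f_b, f_mb, sub_add_cancel]
    have h₁' : ∀ i, b i ≠ m v := fun i h => h₂ ⟨i, by rw [h, hm.involutive]⟩
    have h₂' : ∀ i, m (b i) ≠ m v := fun i h => h₁ ⟨i, hm.involutive.injective h⟩
    rw [f_out v (not_exists.1 h₁) (not_exists.1 h₂), f_out _ h₁' h₂', hm.involutive]

theorem IsPartnerMap.false_of_alternating_cycle (hu : ∃! m, G.IsPartnerMap m)
    (hm : G.IsPartnerMap m) {n : ℕ} (hn : n ≠ 0) (b : Fin (n + 1) → V) (hb : Injective b)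
    (hbm : ∀ i j, b i ≠ m (b j)) (hadj : ∀ i, G.Adj (m (b i)) (b (i + 1))) : False := by
  obtain ⟨f, hf, hfb⟩ := hm.exists_shift_of_alternating_cycle b hb hbm hadj
  have h10 : b 1 = b 0 := by simpa [hu.unique hf hm, hm.involutive (b 0)] using (hfb 0).symm
  have := congrArg Fin.val (hb h10)
  simp [Nat.one_mod_eq_one.2 (by omega : n + 1 ≠ 1)] at this

/-- The `m`-alternating path `a 0, m (a 0), a 1, m (a 1), …, a k, m (a k)`: its matching
edges `s(a i, m (a i))` are distinct and `m (a i)` is adjacent to `a (i + 1)`. -/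
structure IsAltPath (G : SimpleGraph V) (m : V → V) (a : ℕ → V) (k : ℕ) : Prop where
  injOn : Set.InjOn (fun i => s(a i, m (a i))) (Set.Iic k)
  adj : ∀ i < k, G.Adj (m (a i)) (a (i + 1))

namespace IsAltPath

variable {a : ℕ → V} {k i j : ℕ}

theorem zero (a : ℕ → V) : G.IsAltPath m a 0 :=
  ⟨by simp [Set.InjOn], fun _ h => absurd h (Nat.not_lt_zero _)⟩

theorem eq_of_eq (hp : G.IsAltPath m a k) (hi : i ≤ k) (hj : j ≤ k) (h : a i = a j) : i = j :=
  hp.injOn hi hj (by simp only [h])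

theorem ne_partner (hm : G.IsPartnerMap m) (hp : G.IsAltPath m a k) (hi : i ≤ k)
    (hj : j ≤ k) : a i ≠ m (a j) := by
  intro h
  have hij : i = j := hp.injOn hi hj (by simp only [h, hm.involutive (a j), Sym2.eq_swap])
  subst hij
  exact hm.ne (a i) h.symm

theorem lt_card [Fintype V] (hp : G.IsAltPath m a k) : k < Fintype.card V := by
  have hinj : Injective fun i : Fin (k + 1) => a i := fun i j h =>
    Fin.ext (hp.eq_of_eq (Nat.lt_succ_iff.1 i.2) (Nat.lt_succ_iff.1 j.2) h)
  simpa using Fintype.card_le_of_injective _ hinj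

theorem drop (hp : G.IsAltPath m a k) (hi : i ≤ k) :
    G.IsAltPath m (fun j => a (i + j)) (k - i) := by
  refine ⟨fun j hj j' hj' h => ?_, fun j hj => hp.adj (i + j) (by omega)⟩
  simp only [Set.mem_Iic] at hj hj'
  have := hp.injOn (show i + j ≤ k by omega) (show i + j' ≤ k by omega) h
  omega

theorem flip (hm : G.IsPartnerMap m) (hp : G.IsAltPath m a k)
    (hprev : 0 < i → G.Adj (m (a (i - 1))) (m (a i))) (hnext : i < k → G.Adj (a i) (a (i + 1))) :
    G.IsAltPath m (update a i (m (a i))) k := by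
  classical
  have hpair : ∀ j, s(update a i (m (a i)) j, m (update a i (m (a i)) j)) = s(a j, m (a j)) := by
    intro j
    rcases eq_or_ne j i with rfl | hj
    · simp [hm.involutive (a j), Sym2.eq_swap]
    · simp [hj]
  refine ⟨fun j hj j' hj' h => hp.injOn hj hj' (by simpa only [hpair] using h), fun j hj => ?_⟩
  simp only [update_apply]
  split_ifs with h₁ h₂ h₂
  · omega
  · subst h₁; rw [hm.involutive]; exact hnext hj
  · subst h₂; simpa using hprev (by omega)
  · exact hp.adj j hj

theorem snoc (hp : G.IsAltPath m a k) {u : V} (hu : G.Adj (m (a k)) u)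
    (hfresh : ∀ j ≤ k, u ≠ a j ∧ u ≠ m (a j)) :
    G.IsAltPath m (update a (k + 1) u) (k + 1) := by
  classical
  refine ⟨fun j hj j' hj' h => ?_, fun j hj => ?_⟩
  · simp only [Set.mem_Iic] at hj hj'
    simp only [update_apply] at h
    split_ifs at h with h₁ h₂ h₂
    · omega
    · exact absurd h (by have := hfresh j' (by omega); simp_all)
    · exact absurd h.symm (by have := hfresh j (by omega); simp_all)
    · exact hp.injOn (show j ≤ k by omega) (show j' ≤ k by omega) h
  · simp only [update_apply, if_neg (show j ≠ k + 1 by omega)]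
    split_ifs with h
    · simpa [show j = k by omega] using hu
    · exact hp.adj j (by omega)

theorem not_adj_zero (hu : ∃! m, G.IsPartnerMap m) (hm : G.IsPartnerMap m)
    (hp : G.IsAltPath m a k) (hk : k ≠ 0) : ¬G.Adj (m (a k)) (a 0) := by
  intro hclose
  have hle : ∀ i : Fin (k + 1), (i : ℕ) ≤ k := fun i => Nat.lt_succ_iff.1 i.2
  refine hm.false_of_alternating_cycle hu hk (fun i => a i)
    (fun i j h => Fin.ext (hp.eq_of_eq (hle i) (hle j) h))
    (fun i j => hp.ne_partner hm (hle i) (hle j)) fun i => ?_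
  rw [Fin.val_add_one]
  split_ifs with h
  · simpa [h] using hclose
  · exact hp.adj i (by have := hle i; have : (i : ℕ) ≠ k := fun h' => h (Fin.ext h'); omega)

theorem not_adj_of_lt (hu : ∃! m, G.IsPartnerMap m) (hm : G.IsPartnerMap m)
    (hp : G.IsAltPath m a k) (hi : i < k) : ¬G.Adj (m (a k)) (a i) := by
  simpa [show i + (k - i) = k by omega] using (hp.drop hi.le).not_adj_zero hu hm (by omega)

theorem not_adj_of_adj_partner (hu : ∃! m, G.IsPartnerMap m) (hm : G.IsPartnerMap m)
    (hp : G.IsAltPath m a k) (hi : i < k) (hchord : G.Adj (m (a k)) (m (a i))) :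
    ¬G.Adj (a i) (a (i + 1)) := by
  intro hshort
  have hq := (hp.drop hi.le).flip hm (i := 0) (by simp) (fun _ => by simpa using hshort)
  refine hq.not_adj_zero hu hm (by omega) ?_
  simpa [show k - i ≠ 0 by omega, show i + (k - i) = k by omega] using hchord

/-- A neighbour off the path would extend it, and a chord to some `a i` closes an alternating
cycle. A chord to `m (a j)` with `j + 1 < k` gives a claw at `m (a j)` unless `a j` and
`a (j + 1)` are adjacent, which closes another alternating cycle. -/
theorem adj_end (hu : ∃! m, G.IsPartnerMap m) (hm : G.IsPartnerMap m)
    (hcf : ClawFree G) (hp : G.IsAltPath m a k)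
    (hmax : ∀ a' k', G.IsAltPath m a' k' → k' ≤ k) {u : V} (hzu : G.Adj (m (a k)) u) :
    u = a k ∨ 0 < k ∧ u = m (a (k - 1)) := by
  classical
  obtain ⟨j, hj, rfl | rfl⟩ : ∃ j ≤ k, u = a j ∨ u = m (a j) := by
    by_contra! hfresh
    have := hmax _ _ (hp.snoc hzu hfresh)
    omega
  · rcases hj.lt_or_eq with hj | rfl
    · exact absurd hzu (hp.not_adj_of_lt hu hm hj)
    · exact .inl rfl
  have hjk : j < k := hj.lt_of_ne fun h => by subst h; exact G.loopless.irrefl _ hzu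
  refine .inr ⟨by omega, ?_⟩
  by_contra hne
  have hj1 : j + 1 < k := by
    have : j ≠ k - 1 := fun h => hne (h ▸ rfl)
    omega
  have hclique := hcf.isClique_of_not_adj hzu.symm
  refine hp.not_adj_of_adj_partner hu hm hjk hzu
    (hclique ⟨(hm.adj _).symm, hp.ne_partner hm hj le_rfl, hp.not_adj_of_lt hu hm hjk⟩
      ⟨hp.adj j hjk, hp.ne_partner hm hj1.le le_rfl, hp.not_adj_of_lt hu hm hj1⟩
      fun h => by have := hp.eq_of_eq hj hj1.le h; omega)

end IsAltPath

/-- `IsAltPath.adj_end` applied to a longest alternating path and to the same path with its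
last matching edge traversed backwards. -/
theorem exists_triangle_of_forall_exists_adj_ne [Fintype V] [Nonempty V]
    (hu : ∃! m, G.IsPartnerMap m) (hm : G.IsPartnerMap m) (hcf : ClawFree G)
    (hdeg : ∀ v, ∃ w, G.Adj v w ∧ w ≠ m v) :
    ∃ x t, G.Adj x t ∧ G.Adj (m x) t ∧
      (∀ w, G.Adj x w → w = m x ∨ w = t) ∧ (∀ w, G.Adj (m x) w → w = x ∨ w = t) := by
  classical
  let S : Set ℕ := {k | ∃ a, G.IsAltPath m a k}
  have hbdd : BddAbove S := ⟨Fintype.card V, fun _ ⟨_, hp⟩ => hp.lt_card.le⟩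
  obtain ⟨a, hp⟩ : sSup S ∈ S := Nat.sSup_mem ⟨0, fun _ => Classical.arbitrary V, .zero _⟩ hbdd
  have hmax : ∀ a' k', G.IsAltPath m a' k' → k' ≤ sSup S := fun a' k' h => le_csSup hbdd ⟨a', h⟩
  set k := sSup S
  obtain ⟨t, hzt, hta⟩ := hdeg (m (a k))
  obtain ⟨hk, rfl⟩ := ((hp.adj_end hu hm hcf hmax hzt).resolve_left <| by
    rwa [hm.involutive] at hta)
  have hp' := hp.flip hm (i := k) (fun _ => hzt.symm) (fun h => absurd h (lt_irrefl k))
  have hend : m (update a k (m (a k)) k) = a k := by simp [hm.involutive (a k)]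
  refine ⟨m (a k), m (a (k - 1)), hzt, ?_, fun w hw => ?_, fun w hw => ?_⟩
  · simpa [hm.involutive (a k), show k - 1 + 1 = k by omega] using (hp.adj (k - 1) (by omega)).symm
  · rcases hp.adj_end hu hm hcf hmax hw with h | ⟨-, h⟩
    · exact .inl (by rw [h, hm.involutive])
    · exact .inr h
  · rw [hm.involutive] at hw
    rcases hp'.adj_end hu hm hcf hmax (hend ▸ hw) with h | ⟨-, h⟩
    · exact .inl (by simpa using h)
    · exact .inr (by simpa [show k - 1 ≠ k by omega] using h)

theorem bijective_sumElim_pair (hxy : x ≠ y) :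
    Bijective (Sum.elim ((↑) : ↥({x, y}ᶜ : Set V) → V) ![x, y]) := by
  refine ⟨?_, fun v => ?_⟩
  · rintro (a | i) (b | j) h
    · exact congrArg _ (Subtype.ext h)
    · have := ne_and_ne_of_mem_compl_pair a.2
      fin_cases j <;> simp_all
    · have := ne_and_ne_of_mem_compl_pair b.2
      fin_cases i <;> simp_all [eq_comm]
    · fin_cases i <;> fin_cases j <;> simp_all [eq_comm]
  · rcases eq_or_ne v x with rfl | hvx
    · exact ⟨.inr 0, rfl⟩
    rcases eq_or_ne v y with rfl | hvy
    · exact ⟨.inr 1, rfl⟩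
    exact ⟨.inl ⟨v, by simp [hvx, hvy]⟩, rfl⟩

noncomputable def isoOfSumPair (H : SimpleGraph (↥({x, y}ᶜ : Set V) ⊕ Fin 2)) (hxy : x ≠ y)
    (hinl : ∀ a b, H.Adj (.inl a) (.inl b) ↔ G.Adj a b)
    (hx : ∀ a, H.Adj (.inl a) (.inr 0) ↔ G.Adj a x)
    (hy : ∀ a, H.Adj (.inl a) (.inr 1) ↔ G.Adj a y)
    (hxy' : H.Adj (.inr 0) (.inr 1) ↔ G.Adj x y) : H ≃g G where
  toEquiv := .ofBijective _ (bijective_sumElim_pair hxy)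
  map_rel_iff' := by
    rintro (a | i) (b | j)
    · exact (hinl a b).symm
    · fin_cases j <;> simp [hx, hy]
    · fin_cases i <;> simp [← H.adj_comm (.inl b), G.adj_comm _ (b : V), hx, hy]
    · fin_cases i <;> fin_cases j <;> simp [hxy', H.adj_comm (.inr 1), G.adj_comm y]

theorem Connected.forall_eq_or_eq (hG : G.Connected) (hx : ∀ w, G.Adj x w → w = y)
    (hy : ∀ w, G.Adj y w → w = x) (v : V) : v = x ∨ v = y :=
  (hG.preconnected x v).mem_of_forall_adj_mem (S := {x, y})
    (by rintro a w (rfl | rfl) h; exacts [.inr (hx w h), .inl (hy w h)]) (.inl rfl)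

theorem Connected.induce_compl_pair_of_leaf (hG : G.Connected) (hcf : ClawFree G)
    (hxy : G.Adj x y) (hy : ∀ w, G.Adj y w → w = x) (hc : ∃ c, G.Adj x c ∧ c ≠ y) :
    (G.induce ({x, y}ᶜ : Set V)).Connected := by
  obtain ⟨c, hxc, hcy⟩ := hc
  refine hG.induce_compl_of_isClique ((hcf.isClique_of_not_adj hxy).subset ?_)
    ⟨c, by simp [hxc.ne', hcy]⟩
  rintro a ⟨ha, u, hu | hu, hua⟩ <;> subst hu <;> have ha := ne_and_ne_of_mem_compl_pair ha
  · exact ⟨hua, ha.2, fun h => ha.1 (hy a h)⟩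
  · exact absurd (hy a hua) ha.1

theorem Connected.induce_compl_pair_of_triangle (hG : G.Connected) {t : V} (hxt : G.Adj x t)
    (hyt : G.Adj y t) (hx : ∀ w, G.Adj x w → w = y ∨ w = t)
    (hy : ∀ w, G.Adj y w → w = x ∨ w = t) :
    (G.induce ({x, y}ᶜ : Set V)).Connected := by
  refine hG.induce_compl_of_isClique ((isClique_singleton t).subset ?_)
    ⟨t, by simp [hxt.ne', hyt.ne']⟩
  rintro a ⟨ha, u, hu | hu, hua⟩ <;> subst hu <;> have ha := ne_and_ne_of_mem_compl_pair ha
  · exact (hx a hua).resolve_left ha.2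
  · exact (hy a hua).resolve_left ha.1

end SimpleGraph

theorem addOp1_adj_inl_inl {G : SimpleGraph V} {u a b : V} :
    (AddOp1 G u).Adj (.inl a) (.inl b) ↔ G.Adj a b := by
  simp only [AddOp1, fromRel_adj, ne_eq, Sum.inl.injEq, G.adj_comm b a, or_self]
  exact and_iff_right_of_imp Adj.ne

theorem addOp2_adj_inl_inl {G : SimpleGraph V} {C : Set V} {a b : V} :
    (AddOp2 G C).Adj (.inl a) (.inl b) ↔ G.Adj a b := by
  simp only [AddOp2, fromRel_adj, ne_eq, Sum.inl.injEq, G.adj_comm b a, or_self]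
  exact and_iff_right_of_imp Adj.ne

variable {G : SimpleGraph V} {x y : V}

theorem InClassG.of_forall_eq_or_eq [Fintype V] (hxy : G.Adj x y) (hV : ∀ v, v = x ∨ v = y) :
    InClassG V G := by
  have hbij : Bijective ![x, y] := by
    refine ⟨fun i j h => ?_, fun v => ?_⟩
    · fin_cases i <;> fin_cases j <;> simp_all [hxy.ne, hxy.ne']
    · rcases hV v with rfl | rfl
      exacts [⟨0, rfl⟩, ⟨1, rfl⟩]
  refine .iso _ _ ⟨.ofBijective _ hbij, fun {i j} => ?_⟩ .base
  fin_cases i <;> fin_cases j <;> simp [hxy, hxy.symm]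

theorem InClassG.of_pendant (hcf : ClawFree G) (hxy : G.Adj x y) (hy : ∀ w, G.Adj y w → w = x)
    (hC : ∃ c, G.Adj x c ∧ c ≠ y) (h : InClassG _ (G.induce ({x, y}ᶜ : Set V))) :
    InClassG V G := by
  have hne (v : ↥({x, y}ᶜ : Set V)) := ne_and_ne_of_mem_compl_pair v.2
  obtain ⟨c, hxc, hcy⟩ := hC
  have hcx : c ≠ x := hxc.ne'
  refine .iso _ _ (isoOfSumPair _ hxy.ne (fun a b => ?_) (fun a => ?_) (fun a => ?_) ?_)
    (.op2 (G.induce _) {v | G.Adj x v} ⟨⟨c, by simp [hcx, hcy]⟩, hxc⟩ ?_ ?_ h)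
  · exact addOp2_adj_inl_inl
  · simp [AddOp2, G.adj_comm x]
  · simpa [AddOp2] using fun h => (hne a).1 (hy a h.symm)
  · simpa [AddOp2] using hxy
  · intro a ha b hb hab
    exact hcf.isClique_of_not_adj hxy ⟨ha, (hne a).2, fun h => (hne a).1 (hy _ h)⟩
      ⟨hb, (hne b).2, fun h => (hne b).1 (hy _ h)⟩ (Subtype.coe_ne_coe.2 hab)
  · intro u hu a ⟨ha, haC⟩ b ⟨hb, hbC⟩ hab
    exact hcf.isClique_of_not_adj (show G.Adj x u from hu).symm ⟨ha, (hne a).1, haC⟩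
      ⟨hb, (hne b).1, hbC⟩ (Subtype.coe_ne_coe.2 hab)

theorem InClassG.of_triangle (hcf : ClawFree G) {t : V} (hxy : G.Adj x y) (hxt : G.Adj x t)
    (hyt : G.Adj y t) (hx : ∀ w, G.Adj x w → w = y ∨ w = t) (hy : ∀ w, G.Adj y w → w = x ∨ w = t)
    (h : InClassG _ (G.induce ({x, y}ᶜ : Set V))) :
    InClassG V G := by
  have hne (v : ↥({x, y}ᶜ : Set V)) := ne_and_ne_of_mem_compl_pair v.2
  let t' : ↥({x, y}ᶜ : Set V) := ⟨t, by simp [hxt.ne', hyt.ne']⟩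
  have hnx : ∀ a : ↥({x, y}ᶜ : Set V), G.Adj a x ↔ a = t' := fun a => by
    refine ⟨fun h => Subtype.ext ((hx a h.symm).resolve_left (hne a).2), ?_⟩
    rintro rfl; exact hxt.symm
  have hny : ∀ a : ↥({x, y}ᶜ : Set V), G.Adj a y ↔ a = t' := fun a => by
    refine ⟨fun h => Subtype.ext ((hy a h.symm).resolve_left (hne a).1), ?_⟩
    rintro rfl; exact hyt.symm
  refine .iso _ _ (isoOfSumPair _ hxy.ne (fun a b => ?_) (fun a => ?_) (fun a => ?_) ?_)
    (.op1 _ t' ?_ h)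
  · exact addOp1_adj_inl_inl
  · simp [AddOp1, hnx]
  · simp [AddOp1, hny]
  · simpa [AddOp1] using hxy
  · intro a ha b hb hab
    have hnot : ∀ v : ↥({x, y}ᶜ : Set V), G.Adj t v → ¬G.Adj x v := fun v htv hxv =>
      (hne v).2 ((hx v hxv).resolve_right (fun h => G.loopless.irrefl t (h ▸ htv)))
    exact hcf.isClique_of_not_adj hxt.symm ⟨ha, (hne a).1, hnot a ha⟩ ⟨hb, (hne b).1, hnot b hb⟩
      (Subtype.coe_ne_coe.2 hab)

theorem InClassG.of_existsUnique_isPartnerMap [Fintype V] (hconn : G.Connected) (hcf : ClawFree G)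
    (hu : ∃! m, G.IsPartnerMap m) : InClassG V G := by
  classical
  induction h : Fintype.card V using Nat.strong_induction_on generalizing V with
  | _ n ih =>
  obtain ⟨m, hm⟩ := hu.exists
  have reduce : ∀ x, (G.induce ({x, m x}ᶜ : Set V)).Connected →
      InClassG _ (G.induce ({x, m x}ᶜ : Set V)) := fun x hconn' => by
    refine ih _ ?_ hconn' (hcf.induce _) (existsUnique_isPartnerMap_induce hu hm fun v hv => ?_) rfl
    · exact h ▸ Fintype.card_subtype_lt (x := x) (by simp)
    · have hv := ne_and_ne_of_mem_compl_pair hv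
      simp only [Set.mem_compl_iff, Set.mem_insert_iff, Set.mem_singleton_iff, not_or,
        hm.involutive.injective.eq_iff]
      exact ⟨fun h => hv.2 (by rw [← h, hm.involutive]), hv.1⟩
  by_cases hleaf : ∃ y, ∀ w, G.Adj y w → w = m y
  · obtain ⟨y, hy⟩ := hleaf
    have hxy := (hm.adj y).symm
    have hred := hm.involutive y ▸ reduce (m y)
    by_cases hc : ∃ c, G.Adj (m y) c ∧ c ≠ y
    · exact .of_pendant hcf hxy hy hc (hred (hconn.induce_compl_pair_of_leaf hcf hxy hy hc))
    · push Not at hc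
      exact .of_forall_eq_or_eq hxy (hconn.forall_eq_or_eq hc hy)
  · push Not at hleaf
    have : Nonempty V := hconn.nonempty
    obtain ⟨x, t, hxt, hyt, hx, hy⟩ := exists_triangle_of_forall_exists_adj_ne hu hm hcf hleaf
    exact .of_triangle hcf (hm.adj x) hxt hyt hx hy
      (reduce x (hconn.induce_compl_pair_of_triangle hxt hyt hx hy))

end

theorem connected_clawfree_unique_pm_mem_classG (V : Type) [Fintype V]
    (G : SimpleGraph V) (hconn : G.Connected) (hcf : ClawFree G)
    (hupm : ∃! M : G.Subgraph, M.IsPerfectMatching) :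
    InClassG V G :=
  .of_existsUnique_isPartnerMap hconn hcf
    (SimpleGraph.existsUnique_isPartnerMap_of_existsUnique_isPerfectMatching hupm)
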